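/- If G is a 4-regular simple graph in which every edge lies in a triangle, and T = {xy, yz, zx} is an eligible triangle of G, then the graph G' obtained by Operation 2 (deleting the edges of T and adding two new adjacent vertices u, v each adjacent to x, y, z) is 4-regular and every edge of G' lies in a triangle. -/

import Mathlib

/-!
Deleting the triangle costs each of `x`, `y`, `z` two neighbours, and the new vertices `u`, `v`
give them back, while `u` and `v` have exactly the neighbours `x`, `y`, `z` and each other.
An old edge lies in a triangle of `G` minus the triangle by eligibility; an edge from `u` to an old
vertex closes a triangle through `v`, and `uv` closes one through `x`.
-/

open Set

namespace SimpleGraph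

variable {V : Type*}

def EdgesInTriangles (G : SimpleGraph V) : Prop :=
  ∀ u v, G.Adj u v → ∃ w, G.Adj u w ∧ G.Adj v w

def triangleEdges (x y z : V) : Set (Sym2 V) := {s(x, y), s(y, z), s(x, z)}

/-- The new vertices `u`, `v` are `Sum.inr 0`, `Sum.inr 1`. -/
def operation2 (G : SimpleGraph V) (x y z : V) : SimpleGraph (V ⊕ Fin 2) :=
  fromRel <| Sum.elim
    (fun p => Sum.elim (fun q => G.Adj p q ∧ s(p, q) ∉ triangleEdges x y z)
      fun _ => p = x ∨ p = y ∨ p = z)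
    fun _ => Sum.elim (fun _ => False) fun _ => True

variable (G : SimpleGraph V) {x y z : V}

@[simp]
lemma operation2_adj_inl_inl {p q : V} :
    (G.operation2 x y z).Adj (.inl p) (.inl q) ↔
      (G.deleteEdges (triangleEdges x y z)).Adj p q := by
  simp only [operation2, fromRel_adj, Sum.elim_inl, deleteEdges_adj, triangleEdges,
    Sym2.eq_swap (a := q)]
  grind [Adj.ne, Adj.symm]

@[simp]
lemma operation2_adj_inl_inr {p : V} {i : Fin 2} :
    (G.operation2 x y z).Adj (.inl p) (.inr i) ↔ p = x ∨ p = y ∨ p = z := by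
  simp [operation2]

@[simp]
lemma operation2_adj_inr_inl {p : V} {i : Fin 2} :
    (G.operation2 x y z).Adj (.inr i) (.inl p) ↔ p = x ∨ p = y ∨ p = z := by
  simp [operation2]

@[simp]
lemma operation2_adj_inr_inr {i j : Fin 2} :
    (G.operation2 x y z).Adj (.inr i) (.inr j) ↔ i ≠ j := by
  simp [operation2]

lemma operation2_rotate : G.operation2 x y z = G.operation2 y z x := by
  ext (p | i) (q | j) <;> simp [triangleEdges, Sym2.eq_swap, or_comm, or_left_comm]

lemma edgesInTriangles_operation2 (h : (G.deleteEdges (triangleEdges x y z)).EdgesInTriangles) :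
    (G.operation2 x y z).EdgesInTriangles := by
  rintro (p | i) (q | j) hpq
  · obtain ⟨w, hpw, hqw⟩ := h p q (by simpa using hpq)
    exact ⟨.inl w, by simpa using hpw, by simpa using hqw⟩
  · exact ⟨.inr (j + 1), by simpa using hpq, by simp⟩
  · exact ⟨.inr (i + 1), by simp, by simpa using hpq⟩
  · exact ⟨.inl x, by simp, by simp⟩

lemma neighborSet_operation2_inl_of_ne {p : V} (hx : p ≠ x) (hy : p ≠ y) (hz : p ≠ z) :
    (G.operation2 x y z).neighborSet (.inl p) = .inl '' G.neighborSet p := by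
  ext (q | i)
  · simp [triangleEdges, hx, hy, hz]
  · simp [hx, hy, hz]

lemma neighborSet_operation2_inl_left (hxy : G.Adj x y) (hxz : G.Adj x z) :
    (G.operation2 x y z).neighborSet (.inl x) =
      .inl '' (G.neighborSet x \ {y, z}) ∪ range .inr := by
  ext (q | i)
  · simp [triangleEdges, hxy.ne, hxz.ne]
  · simp

lemma neighborSet_operation2_inr (i : Fin 2) :
    (G.operation2 x y z).neighborSet (.inr i) = {.inl x, .inl y, .inl z, .inr (i + 1)} := by
  ext (q | j)
  · simp
  · simp
    omega

lemma encard_neighborSet_operation2_inl_left (hxy : G.Adj x y) (hyz : G.Adj y z)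
    (hxz : G.Adj x z) :
    ((G.operation2 x y z).neighborSet (.inl x)).encard = (G.neighborSet x).encard := by
  have hsub : {y, z} ⊆ G.neighborSet x := pair_subset hxy hxz
  rw [neighborSet_operation2_inl_left G hxy hxz, encard_union_eq, Sum.inl_injective.encard_image,
    ← encard_sdiff_add_encard_of_subset hsub, encard_pair hyz.ne]
  · rw [← image_univ, Sum.inr_injective.encard_image, encard_univ, ENat.card_eq_coe_fintype_card]
    rfl
  · exact isCompl_range_inl_range_inr.disjoint.mono_left (image_subset_range _ _)

lemma encard_neighborSet_operation2_inr (hxy : x ≠ y) (hyz : y ≠ z) (hxz : x ≠ z) (i : Fin 2) :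
    ((G.operation2 x y z).neighborSet (.inr i)).encard = 4 := by
  rw [neighborSet_operation2_inr, encard_insert_of_notMem (by simp [hxy, hxz]),
    encard_insert_of_notMem (by simp [hyz]), encard_pair (by simp)]
  rfl

lemma encard_neighborSet_operation2_inl (hxy : G.Adj x y) (hyz : G.Adj y z) (hxz : G.Adj x z)
    (p : V) : ((G.operation2 x y z).neighborSet (.inl p)).encard = (G.neighborSet p).encard := by
  by_cases hx : p = x
  · rw [hx]
    exact encard_neighborSet_operation2_inl_left G hxy hyz hxz
  by_cases hy : p = y
  · rw [hy, operation2_rotate]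
    exact encard_neighborSet_operation2_inl_left G hyz hxz.symm hxy.symm
  by_cases hz : p = z
  · rw [hz, operation2_rotate, operation2_rotate]
    exact encard_neighborSet_operation2_inl_left G hxz.symm hxy hyz.symm
  rw [neighborSet_operation2_inl_of_ne G hx hy hz, Sum.inl_injective.encard_image]

end SimpleGraph

theorem operation2_preserves_triangle_property {V : Type*} (G : SimpleGraph V)
    (hreg : ∀ u : V, (G.neighborSet u).ncard = 4)
    (x y z : V) (hxy : G.Adj x y) (hyz : G.Adj y z) (hxz : G.Adj x z)
    (heligible : ∀ u v : V,
      (G.deleteEdges {s(x, y), s(y, z), s(x, z)}).Adj u v →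
      ∃ w : V, (G.deleteEdges {s(x, y), s(y, z), s(x, z)}).Adj u w ∧
        (G.deleteEdges {s(x, y), s(y, z), s(x, z)}).Adj v w) :
    let G' : SimpleGraph (V ⊕ Fin 2) :=
      SimpleGraph.fromRel (fun a b =>
        match a, b with
        | Sum.inl p, Sum.inl q =>
            G.Adj p q ∧ s(p, q) ∉ ({s(x, y), s(y, z), s(x, z)} : Set (Sym2 V))
        | Sum.inl p, Sum.inr _ => p = x ∨ p = y ∨ p = z
        | Sum.inr _, Sum.inl _ => False
        | Sum.inr _, Sum.inr _ => True)
    (∀ a : V ⊕ Fin 2, (G'.neighborSet a).ncard = 4) ∧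
      (∀ a b : V ⊕ Fin 2, G'.Adj a b → ∃ c : V ⊕ Fin 2, G'.Adj a c ∧ G'.Adj b c) := by
  intro G'
  have hG' : G' = G.operation2 x y z := by
    ext (p | i) (q | j) <;> rfl
  rw [hG']
  refine ⟨?_, G.edgesInTriangles_operation2 heligible⟩
  rintro (p | i) <;> rw [ncard_def]
  · rw [G.encard_neighborSet_operation2_inl hxy hyz hxz, ← ncard_def, hreg]
  · rw [G.encard_neighborSet_operation2_inr hxy.ne hyz.ne hxz.ne]
    rfl
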